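/- arXiv:1710.01947 — 2 statements merged into one kernel-verified Lean document; each statement's English description precedes it below -/
import Mathlib

section
/- For all integers p ≥ 2 and n ≥ 1, the maximum number of vertices of an induced forest of the Sierpiński graph S_p^n equals 2p^{n−1}, i.e., f(S_p^n) = 2p^{n−1}. -/
open SimpleGraph

/-- The Sierpinski graph `S_p^n` on vertex set `P^n`: two distinct vertices are adjacent
iff they can be written as `s i j^(d-1)` and `s j i^(d-1)`. -/
def sierpinski (p n : Nat) : SimpleGraph (Fin n → Fin p) :=
  SimpleGraph.fromRel (fun u v =>
    ∃ t : Fin n, ∃ i j : Fin p, i ≠ j ∧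
      (∀ k, k < t → u k = v k) ∧ u t = i ∧ v t = j ∧
      (∀ k, t < k → u k = j ∧ v k = i))

/-- `X` is a feedback vertex set of `G` if deleting it leaves an acyclic graph. -/
def IsFeedbackVertexSet {V : Type*} (G : SimpleGraph V) (X : Set V) : Prop :=
  (G.induce Xᶜ).IsAcyclic

/-- The feedback vertex number: the minimum cardinality of a feedback vertex set. -/
noncomputable def feedbackNumber {V : Type*} (G : SimpleGraph V) : Nat :=
  sInf {k | ∃ X : Finset V, X.card = k ∧ IsFeedbackVertexSet G ↑X}

/-- The maximum number of vertices of an induced forest of `G`. -/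
noncomputable def maxInducedForest {V : Type*} (G : SimpleGraph V) : Nat :=
  sSup {k | ∃ Y : Finset V, Y.card = k ∧ (G.induce (↑Y : Set V)).IsAcyclic}

/-!
For the upper bound, the `p` words sharing their first `n - 1` letters form a clique, and a
forest meets a clique in at most two vertices. For the lower bound, keep the words whose last
letter is `0` or `1`. Every edge among them swaps a suffix `0 1…1` with `1 0…0`, so in the
lexicographic order each kept word has at most one smaller neighbour: the one obtained by
turning its last `1` into `0` and the letters after it into `1`. A graph in which every vertex
has at most one smaller neighbour has no cycle, since the largest vertex of a cycle would
have two.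
-/

namespace SimpleGraph

variable {V : Type*} {G : SimpleGraph V}

theorem isAcyclic_of_lower_adj_unique {α : Type*} [LinearOrder α] (f : V → α)
    (hne : ∀ ⦃u v⦄, G.Adj u v → f u ≠ f v)
    (hlower : ∀ ⦃v a b⦄, G.Adj a v → G.Adj b v → f a < f v → f b < f v → a = b) :
    G.IsAcyclic := by
  classical
  intro u c hc
  obtain ⟨v, hv, hmax⟩ := c.support.toFinset.exists_max_image f ⟨u, by simp⟩
  rw [List.mem_toFinset] at hv
  set c' := c.rotate v hv
  have hc' : c'.IsCycle := hc.rotate hv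
  have hnil : ¬ c'.Nil := hc'.not_nil
  have hlt : ∀ w ∈ c'.support, G.Adj w v → f w < f v := fun w hw hwv =>
    (hmax w (by rwa [List.mem_toFinset, ← Walk.mem_support_rotate_iff c v hv])).lt_of_ne
      (hne hwv)
  have hsnd := (c'.adj_snd hnil).symm
  have hpen := c'.adj_penultimate hnil
  exact hc'.snd_ne_penultimate <| hlower hsnd hpen (hlt _ (c'.getVert_mem_support _) hsnd)
    (hlt _ (c'.getVert_mem_support _) hpen)

theorem IsClique.card_le_two_of_isAcyclic_induce {Y t : Finset V}
    (hY : (G.induce (Y : Set V)).IsAcyclic) (htY : t ⊆ Y) (ht : G.IsClique (t : Set V)) :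
    t.card ≤ 2 := by
  classical
  by_contra! h
  obtain ⟨s, hst, hs⟩ := Finset.exists_subset_card_eq (show 3 ≤ t.card by omega)
  refine hY.cliqueFree le_rfl (s.subtype (· ∈ Y)) ?_
  rw [isNClique_induce_iff]
  convert (show G.IsNClique 3 s from ⟨ht.subset (by simpa using hst), hs⟩)
  ext x
  simp only [Finset.mem_map, Finset.mem_subtype, Function.Embedding.coe_subtype]
  exact ⟨fun ⟨y, hy, e⟩ => e ▸ hy, fun hx => ⟨⟨x, htY (hst hx)⟩, hx, rfl⟩⟩

theorem card_le_two_mul_of_isAcyclic_induce {W : Type*} [Fintype W] (g : V → W)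
    (hg : ∀ ⦃u v⦄, u ≠ v → g u = g v → G.Adj u v) {Y : Finset V}
    (hY : (G.induce (Y : Set V)).IsAcyclic) : Y.card ≤ 2 * Fintype.card W := by
  classical
  calc Y.card ≤ 2 * (Y.image g).card :=
        Finset.card_le_mul_card_image Y 2 fun w _ =>
          IsClique.card_le_two_of_isAcyclic_induce hY (Finset.filter_subset _ _)
            fun x hx y hy hxy =>
              hg hxy ((Finset.mem_filter.1 hx).2.trans (Finset.mem_filter.1 hy).2.symm)
    _ ≤ 2 * Fintype.card W := by gcongr; exact Finset.card_le_univ _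

end SimpleGraph

section Sierpinski

variable {p n m : ℕ} {i j : Fin p} {u v : Fin n → Fin p}

/-- `u = s i jᵈ⁻¹` and `v = s j iᵈ⁻¹`, where `t` is the position right after the prefix
`s`. -/
def IsSierpinskiStep (i j : Fin p) (u v : Fin n → Fin p) : Prop :=
  ∃ t : Fin n, (∀ k, k < t → u k = v k) ∧ u t = i ∧ v t = j ∧
    ∀ k, t < k → u k = j ∧ v k = i

theorem IsSierpinskiStep.symm : IsSierpinskiStep i j u v → IsSierpinskiStep j i v u
  | ⟨t, hlt, hu, hv, hgt⟩ =>
    ⟨t, fun k hk => (hlt k hk).symm, hv, hu, fun k hk => (hgt k hk).symm⟩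

theorem sierpinski_adj_iff :
    (sierpinski p n).Adj u v ↔ ∃ i j, i ≠ j ∧ IsSierpinskiStep i j u v := by
  rw [sierpinski, fromRel_adj]
  constructor
  · rintro ⟨-, ⟨t, i, j, hij, h⟩ | ⟨t, i, j, hij, h⟩⟩
    · exact ⟨i, j, hij, t, h⟩
    · exact ⟨j, i, hij.symm, IsSierpinskiStep.symm ⟨t, h⟩⟩
  · rintro ⟨i, j, hij, t, hlt, hu, hv, hgt⟩
    exact ⟨fun e => hij (hu.symm.trans ((congrFun e t).trans hv)),
      Or.inl ⟨t, i, j, hij, hlt, hu, hv, hgt⟩⟩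

theorem IsSierpinskiStep.toLex_lt (h : IsSierpinskiStep i j u v) (hij : i < j) :
    toLex u < toLex v := by
  obtain ⟨t, hlt, hu, hv, -⟩ := h
  exact ⟨t, hlt, by simpa [hu, hv] using hij⟩

theorem IsSierpinskiStep.lt_of_toLex_lt (h : IsSierpinskiStep i j u v) (hij : i ≠ j)
    (huv : toLex u < toLex v) : i < j :=
  hij.lt_or_gt.resolve_right fun hji => (h.symm.toLex_lt hji).not_gt huv

theorem IsSierpinskiStep.left_unique {u' : Fin n → Fin p} (hij : i ≠ j)
    (h : IsSierpinskiStep i j u v) (h' : IsSierpinskiStep i j u' v) : u = u' := by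
  obtain ⟨t, hlt, hu, hv, hgt⟩ := h
  obtain ⟨t', hlt', hu', hv', hgt'⟩ := h'
  obtain rfl : t = t' := by
    by_contra hne
    rcases lt_or_gt_of_ne hne with htt | htt
    · exact hij ((hgt t' htt).2.symm.trans hv')
    · exact hij ((hgt' t htt).2.symm.trans hv)
  funext k
  rcases lt_trichotomy k t with hk | rfl | hk
  · rw [hlt k hk, hlt' k hk]
  · rw [hu, hu']
  · rw [(hgt k hk).1, (hgt' k hk).1]

theorem IsSierpinskiStep.last {u v : Fin (m + 1) → Fin p} (h : IsSierpinskiStep i j u v) :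
    u (Fin.last m) = i ∧ v (Fin.last m) = j ∨ u (Fin.last m) = j ∧ v (Fin.last m) = i := by
  obtain ⟨t, -, hu, hv, hgt⟩ := h
  rcases (Fin.le_last t).lt_or_eq with ht | rfl
  · exact Or.inr (hgt _ ht)
  · exact Or.inl ⟨hu, hv⟩

theorem sierpinski_adj_of_init_eq {u v : Fin (m + 1) → Fin p} (hne : u ≠ v)
    (hinit : Fin.init u = Fin.init v) : (sierpinski p (m + 1)).Adj u v := by
  have hlast : u (Fin.last m) ≠ v (Fin.last m) := fun e =>
    hne (by rw [← Fin.snoc_init_self u, ← Fin.snoc_init_self v, hinit, e])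
  refine sierpinski_adj_iff.2 ⟨_, _, hlast, Fin.last m, fun k hk => ?_, rfl, rfl,
    fun k hk => absurd (Fin.le_last k) hk.not_ge⟩
  simpa [Fin.init] using congrFun hinit (k.castPred hk.ne)

theorem isSierpinskiStep_of_adj_of_toLex_lt {a b : Fin p} (hab : a < b)
    {u v : Fin (m + 1) → Fin p} (hu : u (Fin.last m) = a ∨ u (Fin.last m) = b)
    (hv : v (Fin.last m) = a ∨ v (Fin.last m) = b) (huv : (sierpinski p (m + 1)).Adj u v)
    (hlt : toLex u < toLex v) : IsSierpinskiStep a b u v := by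
  obtain ⟨i, j, hij, h⟩ := sierpinski_adj_iff.1 huv
  have hij' := h.lt_of_toLex_lt hij hlt
  obtain ⟨hi, hj⟩ : (i = a ∨ i = b) ∧ (j = a ∨ j = b) := by
    rcases h.last with ⟨rfl, rfl⟩ | ⟨rfl, rfl⟩
    exacts [⟨hu, hv⟩, ⟨hv, hu⟩]
  obtain ⟨rfl, rfl⟩ : i = a ∧ j = b := by
    rcases hi with rfl | rfl <;> rcases hj with rfl | rfl <;> simp_all [lt_asymm hab]
  exact h

def lastLetterIn (m : ℕ) (T : Finset (Fin p)) : Finset (Fin (m + 1) → Fin p) :=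
  Fintype.piFinset fun k => if k = Fin.last m then T else Finset.univ

theorem mem_lastLetterIn {T : Finset (Fin p)} {u : Fin (m + 1) → Fin p} :
    u ∈ lastLetterIn m T ↔ u (Fin.last m) ∈ T := by
  rw [lastLetterIn, Fintype.mem_piFinset]
  refine ⟨fun h => by simpa using h (Fin.last m), fun h k => ?_⟩
  split_ifs with hk
  · exact hk ▸ h
  · exact Finset.mem_univ _

theorem card_lastLetterIn (T : Finset (Fin p)) : (lastLetterIn m T).card = p ^ m * T.card := by
  simp [lastLetterIn, Fintype.card_piFinset, Fin.prod_univ_castSucc, Fin.castSucc_ne_last]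

theorem isAcyclic_induce_lastLetterIn_pair {a b : Fin p} (hab : a < b) :
    ((sierpinski p (m + 1)).induce
      (lastLetterIn m {a, b} : Set (Fin (m + 1) → Fin p))).IsAcyclic := by
  have hmem (u : (lastLetterIn m {a, b} : Set (Fin (m + 1) → Fin p))) :
      u.1 (Fin.last m) = a ∨ u.1 (Fin.last m) = b := by
    simpa using mem_lastLetterIn.1 u.2
  refine isAcyclic_of_lower_adj_unique (fun u => toLex u.1)
    (fun u v huv e => huv.ne (Subtype.ext e))
    fun v x y hx hy hxv hyv => Subtype.ext ?_
  exact (isSierpinskiStep_of_adj_of_toLex_lt hab (hmem x) (hmem v) hx hxv).left_unique hab.ne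
    (isSierpinskiStep_of_adj_of_toLex_lt hab (hmem y) (hmem v) hy hyv)

end Sierpinski

theorem stmt3 (p n : Nat) (hp : 2 ≤ p) (hn : 1 ≤ n) :
    maxInducedForest (sierpinski p n) = 2 * p ^ (n - 1) := by
  obtain ⟨m, rfl⟩ : ∃ m, n = m + 1 := ⟨n - 1, by omega⟩
  have hab : (⟨0, by omega⟩ : Fin p) < ⟨1, hp⟩ := Fin.mk_lt_mk.2 one_pos
  refine IsGreatest.csSup_eq ⟨⟨_, ?_, isAcyclic_induce_lastLetterIn_pair hab⟩, ?_⟩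
  · rw [card_lastLetterIn, Finset.card_pair hab.ne, Nat.add_sub_cancel, mul_comm]
  · rintro k ⟨Y, rfl, hY⟩
    simpa using card_le_two_mul_of_isAcyclic_induce Fin.init
      (fun _ _ => sierpinski_adj_of_init_eq) hY
end

section
/- For every integer n ≥ 0, every minimum feedback vertex set of the Sierpiński triangle graph Ŝ_3^n contains at most one of the three extreme vertices 0̂, 1̂, 2̂. -/
/-!
A feedback vertex set of `Ŝ_3^n` meets each of the `3^n` bottom triangles `s{0,1,2}`. A vertex
lies in at most two bottom triangles and an extreme vertex in only one, so a feedback vertex set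
containing two extreme vertices has at least `(3^n + 2)/2` elements. On the other hand
`Ŝ_3^(n+1)` consists of three copies of `Ŝ_3^n` meeting pairwise in a single vertex; choosing
feedback vertex sets of the copies that share one of these vertices yields, recursively, a
feedback vertex set with at most `(3^n + 1)/2` elements.
-/

open SimpleGraph

/-- The non-clique edges of `S_p^(n+1)`: edges `{s i j^l, s j i^l}` with `l ≥ 1`,
i.e. adjacency witnessed at a position `t` with `t < n`. -/
def nonCliqueRel (p n : Nat) (u v : Fin (n+1) → Fin p) : Prop :=
  ∃ t : Fin (n+1), (t : Nat) < n ∧ ∃ i j : Fin p, i ≠ j ∧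
    (∀ k, k < t → u k = v k) ∧ u t = i ∧ v t = j ∧
    (∀ k, t < k → u k = j ∧ v k = i)

/-- The setoid identifying the two endpoints of every non-clique edge of `S_p^(n+1)`. -/
def triSetoid (p n : Nat) : Setoid (Fin (n+1) → Fin p) :=
  Relation.EqvGen.setoid (nonCliqueRel p n)

/-- The generalized Sierpinski triangle graph: the contraction of all
non-clique edges of `S_p^(n+1)`. -/
def sierpinskiTriangle (p n : Nat) : SimpleGraph (Quotient (triSetoid p n)) where
  Adj x y := x ≠ y ∧ ∃ u v : Fin (n+1) → Fin p,
    Quotient.mk (triSetoid p n) u = x ∧ Quotient.mk (triSetoid p n) v = y ∧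
    (sierpinski p (n+1)).Adj u v
  symm := by
    constructor
    rintro x y ⟨hxy, u, v, hu, hv, h⟩
    exact ⟨hxy.symm, v, u, hv, hu, h.symm⟩
  loopless := by
    constructor
    rintro x ⟨hxx, -⟩
    exact hxx rfl

namespace SimpleGraph

variable {V W : Type*} {G : SimpleGraph V}

theorem isAcyclic_induce_iff {s : Set V} :
    (G.induce s).IsAcyclic ↔
      ∀ ⦃v : V⦄ (c : G.Walk v v), c.IsCycle → ¬ ∀ x ∈ c.support, x ∈ s := by
  have hinj : Function.Injective (Embedding.induce (G := G) s).toHom := Subtype.val_injective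
  constructor
  · intro h v c hc hs
    refine h (c.induce s hs) ?_
    rwa [← Walk.isCycle_map_iff_of_injective hinj, Walk.map_induce]
  · intro h v c hc
    refine h _ ((Walk.isCycle_map_iff_of_injective hinj).2 hc) fun x hx => ?_
    rw [Walk.support_map, List.mem_map] at hx
    obtain ⟨y, -, rfl⟩ := hx
    exact y.2

noncomputable def Embedding.induceImage {H : SimpleGraph W} (f : G ↪g H) (s : Set V) :
    G.induce s ≃g H.induce (f '' s) where
  toEquiv := Equiv.Set.image f s f.injective
  map_rel_iff' := f.map_adj_iff

variable {S T : Set V} {z : V}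

theorem Walk.IsPath.support_subset_of_inter_subset {u y : V} {p : G.Walk u y} (hp : p.IsPath)
    (hST : S ∩ T ⊆ {z}) (hedge : ∀ u ∈ S \ T, ∀ v ∈ T \ S, ¬ G.Adj u v) (hu : u ∈ S)
    (hsupp : ∀ x ∈ p.support, x ∈ S ∪ T) (hz : z ∈ p.support → y = z) :
    ∀ x ∈ p.support, x ∈ S := by
  induction p with
  | nil => simpa using hu
  | @cons u v y h q ih =>
    rw [Walk.cons_isPath_iff] at hp
    have huz : u ≠ z := by
      rintro rfl
      exact hp.2 (hz (by simp) ▸ q.end_mem_support)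
    have huT : u ∉ T := fun huT => huz (hST ⟨hu, huT⟩)
    have hv : v ∈ S := by
      by_contra hvS
      have hvT : v ∈ T := (hsupp v (by simp)).resolve_left hvS
      exact hedge u ⟨hu, huT⟩ v ⟨hvT, hvS⟩ h
    simpa [hu] using ih hp.1 hv (fun x hx => hsupp x (by simp [hx])) fun hzq => hz (by simp [hzq])

/-- A cycle in `S ∪ T` read from `z`, if it passes through `z`, is a path leaving `z` into one
side and not returning to `z` before its end, so it never crosses to the other side. -/
theorem isAcyclic_induce_union (hS : (G.induce S).IsAcyclic) (hT : (G.induce T).IsAcyclic)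
    (hST : S ∩ T ⊆ {z}) (hedge : ∀ u ∈ S \ T, ∀ v ∈ T \ S, ¬ G.Adj u v) :
    (G.induce (S ∪ T)).IsAcyclic := by
  classical
  rw [isAcyclic_induce_iff] at hS hT ⊢
  have hTS : T ∩ S ⊆ {z} := Set.inter_comm S T ▸ hST
  have hedge' : ∀ u ∈ T \ S, ∀ v ∈ S \ T, ¬ G.Adj u v :=
    fun u hu v hv h => hedge v hv u hu h.symm
  suffices key : ∀ ⦃v⦄ (c : G.Walk v v), c.IsCycle → (∀ x ∈ c.support, x ∈ S ∪ T) →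
      (z ∈ c.support → v = z) → False by
    intro v c hc hsupp
    by_cases hz : z ∈ c.support
    · exact key (c.rotate z hz) (hc.rotate hz) (by simpa using hsupp) fun _ => rfl
    · exact key c hc hsupp fun h => absurd h hz
  intro v c hc hsupp hz
  cases c with
  | nil => exact hc.not_nil Walk.Nil.nil
  | cons h p =>
    have hp : p.IsPath := ((Walk.cons_isCycle_iff p h).1 hc).1
    have hpS : ∀ x ∈ p.support, x ∈ S ∪ T := fun x hx => hsupp x (by simp [hx])
    have hpz : z ∈ p.support → v = z := fun hzp => hz (by simp [hzp])
    have hsupport_cons : ∀ R : Set V, (∀ x ∈ p.support, x ∈ R) →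
        ∀ x ∈ (Walk.cons h p).support, x ∈ R := by
      intro R hR x hx
      rw [Walk.support_cons, List.mem_cons] at hx
      rcases hx with rfl | hx
      exacts [hR _ p.end_mem_support, hR x hx]
    rcases hpS _ p.start_mem_support with ha | ha
    · exact hS _ hc (hsupport_cons S (hp.support_subset_of_inter_subset hST hedge ha hpS hpz))
    · exact hT _ hc (hsupport_cons T (hp.support_subset_of_inter_subset hTS hedge' ha
        (by simpa [Set.union_comm] using hpS) hpz))

end SimpleGraph

namespace Finset

theorem card_filter_mem_add_card_le {α β : Type*} [Fintype α] [DecidableEq β] (f : α → β)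
    {X C : Finset β} (hCX : C ⊆ X) (h2 : ∀ b ∈ X, #{a | f a = b} ≤ 2)
    (h1 : ∀ b ∈ C, #{a | f a = b} ≤ 1) : #{a | f a ∈ X} + #C ≤ 2 * #X := by
  rw [← sum_card_fiberwise_eq_card_filter, ← inter_eq_right.2 hCX, ← filter_mem_eq_inter,
    card_filter, ← sum_add_distrib, mul_comm, ← smul_eq_mul, ← sum_const]
  refine sum_le_sum fun b hb => ?_
  split_ifs with hbC
  exacts [Nat.add_le_add_right (h1 b hbC) 1, h2 b hb]

end Finset

namespace SierpinskiTriangle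

open Finset

variable {p n : ℕ}

abbrev vtx (w : Fin (n+1) → Fin p) : Quotient (triSetoid p n) := Quotient.mk _ w

/-- The extreme vertex `ĉ`, the image of `c^(n+1)`. -/
abbrev corner (n : ℕ) (c : Fin p) : Quotient (triSetoid p n) := vtx fun _ => c

theorem nonCliqueRel_symm {u v : Fin (n+1) → Fin p} (h : nonCliqueRel p n u v) :
    nonCliqueRel p n v u := by
  obtain ⟨t, ht, i, j, hij, hlt, hut, hvt, hgt⟩ := h
  exact ⟨t, ht, j, i, hij.symm, fun k hk => (hlt k hk).symm, hvt, hut,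
    fun k hk => (hgt k hk).symm⟩

/-- The position `t` of a non-clique edge at `u` is the last position where `u` differs
from its final letter, so it, and with it the other endpoint, is determined by `u`. -/
theorem nonCliqueRel_unique {u v w : Fin (n+1) → Fin p} (hv : nonCliqueRel p n u v)
    (hw : nonCliqueRel p n u w) : v = w := by
  obtain ⟨t, ht, i, j, hij, hlt, hut, hvt, hgt⟩ := hv
  obtain ⟨t', ht', i', j', hij', hlt', hut', hwt', hgt'⟩ := hw
  have hj : j = j' := by
    have hlast : ∀ s : Fin (n+1), (s : ℕ) < n → s < Fin.last n := fun s hs => by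
      simpa [Fin.lt_def] using hs
    exact (hgt _ (hlast t ht)).1.symm.trans (hgt' _ (hlast t' ht')).1
  subst hj
  have htt : t = t' := by
    rcases lt_trichotomy t t' with h | h | h
    · exact absurd ((hgt t' h).1.symm.trans hut').symm hij'
    · exact h
    · exact absurd ((hgt' t h).1.symm.trans hut).symm hij
  subst htt
  have hi : i = i' := hut.symm.trans hut'
  subst hi
  funext k
  rcases lt_trichotomy k t with h | rfl | h
  · rw [← hlt k h, hlt' k h]
  · rw [hvt, hwt']
  · rw [(hgt k h).2, (hgt' k h).2]

theorem vtx_eq_vtx_iff {u v : Fin (n+1) → Fin p} :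
    vtx u = vtx v ↔ u = v ∨ nonCliqueRel p n u v := by
  have hequiv : Equivalence (Relation.ReflGen (nonCliqueRel p n)) :=
    ⟨fun _ => .refl, fun {_ _} h => by
      rcases h with _ | h
      exacts [.refl, .single (nonCliqueRel_symm h)],
    fun {_ _ _} h₁ h₂ => by
      rcases h₁ with _ | h₁
      · exact h₂
      rcases h₂ with _ | h₂
      · exact .single h₁
      rw [nonCliqueRel_unique (nonCliqueRel_symm h₁) h₂]⟩
  rw [Quotient.eq]
  change Relation.EqvGen _ u v ↔ _
  rw [← Relation.EqvGen.eqvGen_reflGen, hequiv.eqvGen_iff, Relation.reflGen_iff, eq_comm]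

theorem not_nonCliqueRel_const {u : Fin (n+1) → Fin p} {c : Fin p} :
    ¬ nonCliqueRel p n u fun _ => c := by
  rintro ⟨t, ht, i, j, hij, -, -, hvt, hgt⟩
  exact hij ((hgt (Fin.last n) (by simpa [Fin.lt_def] using ht)).2.symm.trans hvt)

theorem vtx_eq_corner_iff {u : Fin (n+1) → Fin p} {c : Fin p} :
    vtx u = corner n c ↔ u = fun _ => c := by
  rw [vtx_eq_vtx_iff, or_iff_left not_nonCliqueRel_const]

theorem corner_injective : Function.Injective (corner (p := p) n) :=
  fun _ _ h => congrFun (vtx_eq_corner_iff.1 h) 0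

theorem vtx_snoc_injective (s : Fin n → Fin p) :
    Function.Injective fun c => vtx (Fin.snoc s c : Fin (n+1) → Fin p) := by
  intro i j h
  rcases vtx_eq_vtx_iff.1 h with h | ⟨t, ht, i', j', hij, -, hut, hvt, -⟩
  · simpa using congrFun h (Fin.last n)
  · obtain ⟨t, rfl⟩ := Fin.exists_castSucc_eq.2 (Fin.ne_of_lt (by simpa [Fin.lt_def] using ht))
    simp only [Fin.snoc_castSucc] at hut hvt
    exact absurd (hut.symm.trans hvt) hij

theorem adj_vtx_snoc (s : Fin n → Fin p) {i j : Fin p} (hij : i ≠ j) :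
    (sierpinskiTriangle p n).Adj (vtx (Fin.snoc s i)) (vtx (Fin.snoc s j)) := by
  refine ⟨fun h => hij (vtx_snoc_injective s h), _, _, rfl, rfl, ?_⟩
  rw [sierpinski, fromRel_adj]
  refine ⟨fun h => hij (by simpa using congrFun h (Fin.last n)),
    Or.inl ⟨Fin.last n, i, j, hij, fun k hk => ?_, by simp, by simp,
      fun k hk => absurd hk (Fin.le_last k).not_gt⟩⟩
  obtain ⟨k, rfl⟩ := Fin.exists_castSucc_eq.2 (Fin.ne_of_lt hk)
  simp

/-- `h` is the relation defining `sierpinski`: an edge of `S_p^(n+1)` that survives the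
contraction is a clique edge. -/
theorem exists_snoc_of_vtx_ne {u v : Fin (n+1) → Fin p} (hne : vtx u ≠ vtx v)
    (h : ∃ t : Fin (n+1), ∃ i j : Fin p, i ≠ j ∧ (∀ k, k < t → u k = v k) ∧ u t = i ∧
      v t = j ∧ ∀ k, t < k → u k = j ∧ v k = i) :
    ∃ (s : Fin n → Fin p) (i j : Fin p), i ≠ j ∧ u = Fin.snoc s i ∧ v = Fin.snoc s j := by
  obtain ⟨t, i, j, hij, hlt, hut, hvt, hgt⟩ := h
  by_cases htn : (t : ℕ) < n
  · exact absurd (vtx_eq_vtx_iff.2 (Or.inr ⟨t, htn, i, j, hij, hlt, hut, hvt, hgt⟩)) hne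
  obtain rfl : t = Fin.last n := Fin.ext (by have := t.isLt; simp; omega)
  have hinit : Fin.init v = Fin.init u := funext fun k => (hlt _ (Fin.castSucc_lt_last k)).symm
  refine ⟨Fin.init u, i, j, hij, ?_, ?_⟩
  · rw [← hut, Fin.snoc_init_self]
  · rw [← hvt, ← hinit, Fin.snoc_init_self]

theorem adj_iff {x y : Quotient (triSetoid p n)} :
    (sierpinskiTriangle p n).Adj x y ↔ ∃ (s : Fin n → Fin p) (i j : Fin p),
      i ≠ j ∧ x = vtx (Fin.snoc s i) ∧ y = vtx (Fin.snoc s j) := by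
  refine ⟨?_, fun ⟨s, i, j, hij, hx, hy⟩ => hx ▸ hy ▸ adj_vtx_snoc s hij⟩
  rintro ⟨hxy, u, v, rfl, rfl, huv⟩
  rw [sierpinski, fromRel_adj] at huv
  rcases huv.2 with h | h
  · obtain ⟨s, i, j, hij, hu, hv⟩ := exists_snoc_of_vtx_ne hxy h
    exact ⟨s, i, j, hij, hu ▸ rfl, hv ▸ rfl⟩
  · obtain ⟨s, i, j, hij, hv, hu⟩ := exists_snoc_of_vtx_ne (Ne.symm hxy) h
    exact ⟨s, j, i, hij.symm, hu ▸ rfl, hv ▸ rfl⟩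

theorem nonCliqueRel_cons_iff {a : Fin p} {u v : Fin (n+1) → Fin p} :
    nonCliqueRel p (n+1) (Fin.cons a u) (Fin.cons a v) ↔ nonCliqueRel p n u v := by
  constructor
  · rintro ⟨t, ht, i, j, hij, hlt, hut, hvt, hgt⟩
    induction t using Fin.cases with
    | zero => exact absurd ((hut : a = i).symm.trans hvt) hij
    | succ t =>
      refine ⟨t, by simpa using ht, i, j, hij, fun k hk => ?_, by simpa using hut,
        by simpa using hvt, fun k hk => ?_⟩
      · simpa using hlt k.succ (Fin.succ_lt_succ_iff.2 hk)
      · simpa using hgt k.succ (Fin.succ_lt_succ_iff.2 hk)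
  · rintro ⟨t, ht, i, j, hij, hlt, hut, hvt, hgt⟩
    refine ⟨t.succ, by simpa using ht, i, j, hij, fun k hk => ?_, by simpa using hut,
      by simpa using hvt, fun k hk => ?_⟩
    · induction k using Fin.cases with
      | zero => rfl
      | succ k => simpa using hlt k (Fin.succ_lt_succ_iff.1 hk)
    · induction k using Fin.cases with
      | zero => exact absurd hk (Fin.succ_pos t).not_gt
      | succ k => simpa using hgt k (Fin.succ_lt_succ_iff.1 hk)

theorem nonCliqueRel_cons_cons_iff {a b : Fin p} (hab : a ≠ b) {u v : Fin (n+1) → Fin p} :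
    nonCliqueRel p (n+1) (Fin.cons a u) (Fin.cons b v) ↔ u = (fun _ => b) ∧ v = fun _ => a := by
  constructor
  · rintro ⟨t, -, i, j, -, hlt, hut, hvt, hgt⟩
    induction t using Fin.cases with
    | zero =>
      obtain rfl : a = i := hut
      obtain rfl : b = j := hvt
      exact ⟨funext fun k => by simpa using (hgt k.succ k.succ_pos).1,
        funext fun k => by simpa using (hgt k.succ k.succ_pos).2⟩
    | succ t => exact absurd (hlt 0 t.succ_pos) hab
  · rintro ⟨rfl, rfl⟩
    refine ⟨0, by simp, a, b, hab, fun k hk => absurd hk (Fin.not_lt_zero k), rfl, rfl,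
      fun k hk => ?_⟩
    induction k using Fin.cases with
    | zero => exact absurd hk (lt_irrefl 0)
    | succ k => simp

/-- The copy `aŜ_p^n` of `Ŝ_p^n` inside `Ŝ_p^(n+1)`. -/
def copy (a : Fin p) : Quotient (triSetoid p n) → Quotient (triSetoid p (n+1)) :=
  Quotient.lift (fun u => vtx (Fin.cons a u)) fun u v h => by
    rcases vtx_eq_vtx_iff.1 (Quotient.sound h) with rfl | h
    exacts [rfl, vtx_eq_vtx_iff.2 (Or.inr (nonCliqueRel_cons_iff.2 h))]

@[simp]
theorem copy_vtx (a : Fin p) (u : Fin (n+1) → Fin p) : copy a (vtx u) = vtx (Fin.cons a u) :=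
  rfl

theorem copy_injective (a : Fin p) : Function.Injective (copy (n := n) a) := by
  rintro ⟨u⟩ ⟨v⟩ h
  change vtx (Fin.cons a u) = vtx (Fin.cons a v) at h
  rw [vtx_eq_vtx_iff, Fin.cons_inj, nonCliqueRel_cons_iff] at h
  exact vtx_eq_vtx_iff.2 (by simpa using h)

/-- Two copies meet in the contracted edge `{a b^n, b a^n}`. -/
theorem copy_eq_copy_iff {a b : Fin p} (hab : a ≠ b) {x y : Quotient (triSetoid p n)} :
    copy a x = copy b y ↔ x = corner n b ∧ y = corner n a := by
  induction x using Quotient.inductionOn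
  induction y using Quotient.inductionOn
  change vtx _ = vtx _ ↔ vtx _ = corner n b ∧ vtx _ = corner n a
  rw [vtx_eq_vtx_iff, nonCliqueRel_cons_cons_iff hab, vtx_eq_corner_iff, vtx_eq_corner_iff,
    Fin.cons_inj, or_iff_right fun h => hab h.1]

theorem range_copy_inter_range_copy {a b : Fin p} (hab : a ≠ b) :
    Set.range (copy (n := n) a) ∩ Set.range (copy b) = {copy a (corner n b)} := by
  ext x
  simp only [Set.mem_inter_iff, Set.mem_range, Set.mem_singleton_iff]
  constructor
  · rintro ⟨⟨y, rfl⟩, z, hz⟩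
    rw [((copy_eq_copy_iff hab).1 hz.symm).1]
  · rintro rfl
    exact ⟨⟨_, rfl⟩, corner n a, ((copy_eq_copy_iff hab).2 ⟨rfl, rfl⟩).symm⟩

theorem exists_eq_copy (x : Quotient (triSetoid p (n+1))) : ∃ a y, x = copy a y := by
  induction x using Quotient.inductionOn with
  | h w => exact ⟨w 0, vtx (Fin.tail w), by rw [copy_vtx, Fin.cons_self_tail]⟩

theorem corner_succ (c : Fin p) : corner (n+1) c = copy c (corner n c) := by
  rw [copy_vtx]
  exact congrArg vtx (funext fun k => by induction k using Fin.cases <;> rfl)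

theorem adj_succ_iff {x y : Quotient (triSetoid p (n+1))} :
    (sierpinskiTriangle p (n+1)).Adj x y ↔ ∃ (a : Fin p) (x' y' : Quotient (triSetoid p n)),
      (sierpinskiTriangle p n).Adj x' y' ∧ x = copy a x' ∧ y = copy a y' := by
  constructor
  · rw [adj_iff]
    rintro ⟨s, i, j, hij, rfl, rfl⟩
    refine ⟨s 0, _, _, adj_vtx_snoc (Fin.tail s) hij, ?_, ?_⟩ <;>
      rw [copy_vtx, Fin.cons_snoc_eq_snoc_cons, Fin.cons_self_tail]
  · rintro ⟨a, x', y', h, rfl, rfl⟩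
    obtain ⟨s, i, j, hij, rfl, rfl⟩ := adj_iff.1 h
    rw [copy_vtx, copy_vtx, Fin.cons_snoc_eq_snoc_cons, Fin.cons_snoc_eq_snoc_cons]
    exact adj_vtx_snoc _ hij

theorem copy_adj_copy_iff {a : Fin p} {x y : Quotient (triSetoid p n)} :
    (sierpinskiTriangle p (n+1)).Adj (copy a x) (copy a y) ↔
      (sierpinskiTriangle p n).Adj x y := by
  refine ⟨fun h => ?_, fun h => adj_succ_iff.2 ⟨a, x, y, h, rfl, rfl⟩⟩
  obtain ⟨b, x', y', h', hx, hy⟩ := adj_succ_iff.1 h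
  obtain rfl | hab := eq_or_ne a b
  · rwa [copy_injective a hx, copy_injective a hy]
  · rw [((copy_eq_copy_iff hab).1 hx).1, ← ((copy_eq_copy_iff hab).1 hy).1] at h
    exact absurd h (SimpleGraph.irrefl _)

def copyEmbedding (a : Fin p) : sierpinskiTriangle p n ↪g sierpinskiTriangle p (n+1) :=
  ⟨⟨copy a, copy_injective a⟩, copy_adj_copy_iff⟩

theorem exists_mem_range_copy_of_adj {u v : Quotient (triSetoid p (n+1))}
    (h : (sierpinskiTriangle p (n+1)).Adj u v) :
    ∃ c, u ∈ Set.range (copy c) ∧ v ∈ Set.range (copy c) := by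
  obtain ⟨c, x, y, -, rfl, rfl⟩ := adj_succ_iff.1 h
  exact ⟨c, ⟨x, rfl⟩, ⟨y, rfl⟩⟩

/-- The three copies of `Ŝ_3^n` in `Ŝ_3^(n+1)` are glued in a triangle; once the vertex shared by
the copies `a` and `b` is deleted they form a path `a – k – b` of pieces, each meeting the next
in a single vertex. -/
theorem isFeedbackVertexSet_of_copies {Y : Set (Quotient (triSetoid 3 (n+1)))}
    (hY : ∀ c, ((sierpinskiTriangle 3 (n+1)).induce (Set.range (copy c) \ Y)).IsAcyclic)
    {a b : Fin 3} (hab : a ≠ b) (hjunction : copy a (corner n b) ∈ Y) :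
    IsFeedbackVertexSet (sierpinskiTriangle 3 (n+1)) Y := by
  have hthird : ∀ a b : Fin 3, a ≠ b → ∃ k, k ≠ a ∧ k ≠ b ∧ ∀ c, c = k ∨ c = a ∨ c = b := by
    decide
  obtain ⟨k, hka, hkb, hcover⟩ := hthird a b hab
  set R : Fin 3 → Set (Quotient (triSetoid 3 (n+1))) := fun c => Set.range (copy c)
  have hRab : R a ∩ R b ⊆ Y := by
    rw [range_copy_inter_range_copy hab, Set.singleton_subset_iff]
    exact hjunction
  have hcompl : Yᶜ = ((R k \ Y) ∪ (R a \ Y)) ∪ (R b \ Y) := by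
    ext x
    obtain ⟨c, y, rfl⟩ := exists_eq_copy x
    have hc : copy c y ∈ R c := ⟨y, rfl⟩
    simp only [Set.mem_compl_iff, Set.mem_union, Set.mem_sdiff]
    rcases hcover c with rfl | rfl | rfl <;> tauto
  unfold IsFeedbackVertexSet
  rw [hcompl]
  refine isAcyclic_induce_union (z := copy k (corner n b))
    (isAcyclic_induce_union (z := copy k (corner n a)) (hY k) (hY a) ?_ ?_) (hY b) ?_ ?_
  · rw [← range_copy_inter_range_copy hka]
    exact fun x hx => ⟨hx.1.1, hx.2.1⟩
  · rintro u ⟨⟨-, huY⟩, hau⟩ v ⟨⟨hav, hvY⟩, hkv⟩ huv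
    obtain ⟨c, huc, hvc⟩ := exists_mem_range_copy_of_adj huv
    rcases hcover c with rfl | rfl | rfl
    · exact hkv ⟨hvc, hvY⟩
    · exact hau ⟨huc, huY⟩
    · exact hvY (hRab ⟨hav, hvc⟩)
  · rintro x ⟨hx | hx, hxb⟩
    · rw [← range_copy_inter_range_copy hkb]
      exact ⟨hx.1, hxb.1⟩
    · exact absurd (hRab ⟨hx.1, hxb.1⟩) hx.2
  · rintro u ⟨hu, hbu⟩ v ⟨⟨-, hvY⟩, hv⟩ huv
    obtain ⟨c, huc, hvc⟩ := exists_mem_range_copy_of_adj huv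
    have huY : u ∉ Y := by rcases hu with h | h <;> exact h.2
    rcases hcover c with rfl | rfl | rfl
    · exact hv (Or.inl ⟨hvc, hvY⟩)
    · exact hv (Or.inr ⟨hvc, hvY⟩)
    · exact hbu ⟨huc, huY⟩

section LiftFamily

open Classical in
noncomputable def liftFamily (Ys : Fin p → Finset (Quotient (triSetoid p n))) :
    Finset (Quotient (triSetoid p (n+1))) :=
  (univ.sigma Ys).image fun x => copy x.1 x.2

/-- `copy a (corner n b)` and `copy b (corner n a)` are the same vertex of `Ŝ_p^(n+1)`, so the
family must treat them alike. -/
def AgreeOnJunctions (Ys : Fin p → Finset (Quotient (triSetoid p n))) : Prop :=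
  ∀ a b, a ≠ b → (corner n b ∈ Ys a ↔ corner n a ∈ Ys b)

variable {Ys : Fin p → Finset (Quotient (triSetoid p n))}

theorem copy_mem_liftFamily_iff (hYs : AgreeOnJunctions Ys) {a : Fin p}
    {x : Quotient (triSetoid p n)} : copy a x ∈ liftFamily Ys ↔ x ∈ Ys a := by
  classical
  refine ⟨fun h => ?_, fun h => mem_image.2 ⟨⟨a, x⟩, mem_sigma.2 ⟨mem_univ a, h⟩, rfl⟩⟩
  obtain ⟨⟨b, y⟩, hy, hyx⟩ := mem_image.1 h
  simp only [mem_sigma, mem_univ, true_and] at hy hyx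
  obtain rfl | hba := eq_or_ne b a
  · rwa [← copy_injective b hyx]
  · obtain ⟨rfl, rfl⟩ := (copy_eq_copy_iff hba).1 hyx
    exact (hYs b a hba).1 hy

theorem range_copy_diff_liftFamily (hYs : AgreeOnJunctions Ys) (a : Fin p) :
    Set.range (copy a) \ ↑(liftFamily Ys) =
      copy a '' (Ys a : Set (Quotient (triSetoid p n)))ᶜ := by
  ext x
  constructor
  · rintro ⟨⟨y, rfl⟩, hy⟩
    exact ⟨y, fun h => hy (copy_mem_liftFamily_iff hYs |>.2 h), rfl⟩
  · rintro ⟨y, hy, rfl⟩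
    exact ⟨⟨y, rfl⟩, fun h => hy (copy_mem_liftFamily_iff hYs |>.1 h)⟩

/-- A junction lying in two copies is counted twice in the sum. -/
theorem card_liftFamily_lt (hYs : AgreeOnJunctions Ys) {a b : Fin p} (hab : a ≠ b)
    (h : corner n b ∈ Ys a) : #(liftFamily Ys) < ∑ c, #(Ys c) := by
  classical
  rw [← card_sigma]
  refine lt_of_le_of_ne card_image_le fun heq => hab ?_
  have hinj := card_image_iff.1 heq
  have hmem : ∀ {c d}, corner n d ∈ Ys c →
      (⟨c, corner n d⟩ : Σ _, _) ∈ (univ.sigma Ys : Set _) :=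
    fun hd => mem_sigma.2 ⟨mem_univ _, hd⟩
  exact congrArg Sigma.fst (hinj (hmem h) (hmem ((hYs a b hab).1 h))
    ((copy_eq_copy_iff hab).2 ⟨rfl, rfl⟩))

end LiftFamily

theorem range_corner_zero : Set.range (corner (p := p) 0) = Set.univ := by
  refine Set.eq_univ_of_forall fun x => ?_
  induction x using Quotient.inductionOn with
  | h w => exact ⟨w 0, congrArg vtx (funext fun i => by rw [Fin.fin_one_eq_zero i])⟩

theorem isFeedbackVertexSet_corner_zero (k : Fin 3) :
    IsFeedbackVertexSet (sierpinskiTriangle 3 0) {corner 0 k} := by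
  refine IsAcyclic.of_card_le_two ?_
  have hsub : ({corner 0 k}ᶜ : Set (Quotient (triSetoid 3 0))) ⊆ corner 0 '' {k}ᶜ := by
    intro x hx
    obtain ⟨c, rfl⟩ : x ∈ Set.range (corner 0) := range_corner_zero ▸ Set.mem_univ x
    exact ⟨c, fun hc => hx (congrArg (corner 0) hc), rfl⟩
  calc ENat.card ({corner 0 k}ᶜ : Set (Quotient (triSetoid 3 0)))
      ≤ ({k}ᶜ : Set (Fin 3)).encard :=
        (ENat.card_coe_set_eq _).trans_le
          ((Set.encard_le_encard hsub).trans (Set.encard_image_le _ _))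
    _ = 2 := by
      rw [← Finset.coe_singleton, ← Finset.coe_compl, Set.encard_coe_eq_coe_finsetCard,
        card_compl, card_singleton, Fintype.card_fin]
      rfl

/-- Recursively, `Ŝ_3^(n+1)` has a small feedback vertex set meeting the extreme vertices only in
`k̂`: put the set for `k̂` into the copy `k`, and into each of the other two copies the set for the
extreme vertex where it meets the third copy, so that this shared vertex is deleted once but
counted twice. -/
theorem exists_isFeedbackVertexSet_two_mul_card_le (n : ℕ) (k : Fin 3) :
    ∃ Y : Finset (Quotient (triSetoid 3 n)), IsFeedbackVertexSet (sierpinskiTriangle 3 n) ↑Y ∧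
      2 * #Y ≤ 3 ^ n + 1 ∧ ∀ c, corner n c ∈ Y ↔ c = k := by
  induction n generalizing k with
  | zero =>
    exact ⟨{corner 0 k}, by simpa using isFeedbackVertexSet_corner_zero k, by simp,
      fun c => by simp [corner_injective.eq_iff]⟩
  | succ n ih =>
    choose Ys hYs using ih
    -- `σ` is the reflection of `Fin 3` fixing `k`
    obtain ⟨σ, hσσ, hσ⟩ : ∃ σ : Fin 3 → Fin 3, (∀ c, σ (σ c) = c) ∧ ∀ c, σ c = c ↔ c = k :=
      ⟨fun c => -(k + c), by revert k; decide⟩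
    have hmem (a c : Fin 3) : corner n c ∈ Ys (σ a) ↔ c = σ a := (hYs (σ a)).2.2 c
    have hagree : AgreeOnJunctions fun a => Ys (σ a) := by
      intro a b _
      rw [hmem, hmem]
      exact ⟨fun h => by rw [h, hσσ], fun h => by rw [h, hσσ]⟩
    have hk : σ (k + 1) ≠ k + 1 := fun h => by simpa using (hσ _).1 h
    have hjunction := (hmem (k + 1) _).2 rfl
    refine ⟨liftFamily fun a => Ys (σ a), ?_, ?_, fun c => ?_⟩
    · refine isFeedbackVertexSet_of_copies (fun c => ?_) hk.symm
        ((copy_mem_liftFamily_iff hagree).2 hjunction)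
      rw [range_copy_diff_liftFamily hagree]
      exact (((copyEmbedding c).induceImage _).isAcyclic_iff).1 (hYs (σ c)).1
    · have hlt := card_liftFamily_lt hagree hk.symm hjunction
      rw [Fin.sum_univ_three] at hlt
      have h0 := (hYs (σ 0)).2.1
      have h1 := (hYs (σ 1)).2.1
      have h2 := (hYs (σ 2)).2.1
      rw [pow_succ]
      omega
    · rw [corner_succ, copy_mem_liftFamily_iff hagree, hmem, eq_comm, hσ]

theorem exists_vtx_snoc_mem {X : Set (Quotient (triSetoid 3 n))}
    (hX : IsFeedbackVertexSet (sierpinskiTriangle 3 n) X) (s : Fin n → Fin 3) :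
    ∃ c, vtx (Fin.snoc s c) ∈ X := by
  classical
  by_contra! h
  let v : Fin 3 → ↥Xᶜ := fun c => ⟨vtx (Fin.snoc s c), h c⟩
  have hadj (i j : Fin 3) (hij : i ≠ j) :
      ((sierpinskiTriangle 3 n).induce Xᶜ).Adj (v i) (v j) :=
    adj_vtx_snoc s hij
  exact hX.cliqueFree le_rfl {v 0, v 1, v 2}
    (is3Clique_triple_iff.2 ⟨hadj 0 1 (by decide), hadj 0 2 (by decide), hadj 1 2 (by decide)⟩)

theorem card_filter_vtx_eq_le_two [DecidableEq (Quotient (triSetoid p n))]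
    (x : Quotient (triSetoid p n)) : #{w | vtx w = x} ≤ 2 := by
  classical
  obtain ⟨w₀, rfl⟩ := Quotient.exists_rep x
  calc #{w | vtx w = vtx w₀}
      ≤ #(insert w₀ (univ.filter (nonCliqueRel p n w₀))) := card_le_card fun w hw => by
        rcases vtx_eq_vtx_iff.1 (mem_filter.1 hw).2 with rfl | h
        · exact mem_insert_self _ _
        · exact mem_insert_of_mem (mem_filter.2 ⟨mem_univ _, nonCliqueRel_symm h⟩)
    _ ≤ 1 + 1 := (card_insert_le _ _).trans (Nat.add_le_add_right (card_le_one.2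
        fun _ ha _ hb => nonCliqueRel_unique (mem_filter.1 ha).2 (mem_filter.1 hb).2) 1)

theorem card_filter_vtx_eq_corner_le_one [DecidableEq (Quotient (triSetoid p n))] (c : Fin p) :
    #{w | vtx w = corner n c} ≤ 1 :=
  card_le_one.2 fun _ ha _ hb =>
    (vtx_eq_corner_iff.1 (mem_filter.1 ha).2).trans
      (vtx_eq_corner_iff.1 (mem_filter.1 hb).2).symm

/-- Each of the `3^n` bottom triangles is hit, a vertex of `Ŝ_3^n` lies in at most two bottom
triangles, and an extreme vertex in only one. -/
theorem three_pow_add_two_le_two_mul_card [DecidableEq (Quotient (triSetoid 3 n))]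
    {X : Finset (Quotient (triSetoid 3 n))}
    (hX : IsFeedbackVertexSet (sierpinskiTriangle 3 n) ↑X)
    {a b : Fin 3} (hab : a ≠ b) (ha : corner n a ∈ X) (hb : corner n b ∈ X) :
    3 ^ n + 2 ≤ 2 * #X := by
  have hhit : 3 ^ n ≤ #{w | vtx w ∈ X} := by
    have huniv : #(univ : Finset (Fin n → Fin 3)) = 3 ^ n := by simp
    refine huniv ▸ card_le_card_of_surjOn Fin.init fun s _ => ?_
    obtain ⟨c, hc⟩ := exists_vtx_snoc_mem hX s
    exact ⟨Fin.snoc s c, mem_filter.2 ⟨mem_univ _, hc⟩, Fin.init_snoc _ _⟩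
  have hcount := card_filter_mem_add_card_le vtx (C := {corner n a, corner n b})
    (insert_subset ha (singleton_subset_iff.2 hb)) (fun x _ => card_filter_vtx_eq_le_two x)
    (by simpa using ⟨card_filter_vtx_eq_corner_le_one a, card_filter_vtx_eq_corner_le_one b⟩)
  rw [card_pair (corner_injective.ne hab)] at hcount
  omega

end SierpinskiTriangle

open SierpinskiTriangle in
theorem stmt11 (n : Nat) (X : Finset (Quotient (triSetoid 3 n)))
    (hX : IsFeedbackVertexSet (sierpinskiTriangle 3 n) ↑X)
    (hmin : X.card = feedbackNumber (sierpinskiTriangle 3 n)) :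
    ((↑X : Set (Quotient (triSetoid 3 n))) ∩
      Set.range (fun k : Fin 3 =>
        Quotient.mk (triSetoid 3 n) (fun _ => k))).Subsingleton := by
  classical
  rintro _ ⟨ha, a, rfl⟩ _ ⟨hb, b, rfl⟩
  by_contra hne
  have hlower := three_pow_add_two_le_two_mul_card hX (fun hab => hne (by rw [hab])) ha hb
  obtain ⟨Y, hY, hYcard, -⟩ := exists_isFeedbackVertexSet_two_mul_card_le n 0
  have hXY : X.card ≤ Y.card := hmin ▸ Nat.sInf_le ⟨Y, rfl, hY⟩
  omega
end
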